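/- Let a ∈ ℝ, b > 0 and x₀ ≥ 0, and let ρ^F be the Smoluchowski fundamental solution on the half-line with these parameters. Then for all t > 0 the no-flux boundary condition holds at x = 0: a ρ^F(0,t) − b ∂_x ρ^F(0,t) = 0. -/

import Mathlib

/-!
At the wall the source Gaussian and its image, weighted by `exp (-(a / b) * x₀)`, take the same
value `K`, and their slopes sum to `(a / b) * K`. The correction term
`H = a / (2b) · exp ((a / b) x) · erfc(…)` satisfies `H' = (a / b) H - (a / b) K` at `x = 0`,
since differentiating the Gaussian tail integral gives back the Gaussian, i.e. `K` again.
Hence `∂ₓρ(0, t) = (a / b) ρ(0, t)`, which is the no-flux condition.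
-/
open MeasureTheory Set

/-- The Smoluchowski fundamental solution on the half-line with drift `a`,
diffusion `b` and initial point `x₀`. -/
noncomputable def smolFund (a b x₀ : ℝ) (x t : ℝ) : ℝ :=
  (Real.sqrt (4 * Real.pi * b * t))⁻¹ * Real.exp (-(x - x₀ - a * t) ^ 2 / (4 * b * t))
  + (Real.sqrt (4 * Real.pi * b * t))⁻¹ *
      Real.exp (-(a / b) * x₀ - (x + x₀ - a * t) ^ 2 / (4 * b * t))
  - a / (2 * b) * Real.exp ((a / b) * x) *
      ((2 / Real.sqrt Real.pi) *
        ∫ y in Ioi ((x + x₀ + a * t) / Real.sqrt (4 * b * t)), Real.exp (-y ^ 2))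

open Real

theorem hasDerivAt_integral_Ioi {E : Type*} [NormedAddCommGroup E] [NormedSpace ℝ E]
    [CompleteSpace E] {f : ℝ → E} {u : ℝ} (hf : Integrable f) (hu : ContinuousAt f u) :
    HasDerivAt (fun v => ∫ y in Ioi v, f y) (-f u) u := by
  have h := (intervalIntegral.integral_hasDerivAt_right
    (hf.intervalIntegrable (a := 0) (b := u)) hf.aestronglyMeasurable.stronglyMeasurableAtFilter
    hu).const_sub (∫ y in Ioi 0, f y)
  refine h.congr_of_eventuallyEq (Filter.Eventually.of_forall fun v => ?_)
  dsimp only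
  rw [← intervalIntegral.integral_Ioi_sub_Ioi' hf.integrableOn hf.integrableOn, sub_sub_cancel]

theorem HasDerivAt.integral_Ioi_exp_neg_sq {g : ℝ → ℝ} {g' x : ℝ} (hg : HasDerivAt g g' x) :
    HasDerivAt (fun ξ => ∫ y in Ioi (g ξ), Real.exp (-y ^ 2))
      (-Real.exp (-g x ^ 2) * g') x := by
  have hgauss : Integrable fun y : ℝ => Real.exp (-y ^ 2) := by
    simpa using integrable_exp_neg_mul_sq one_pos
  exact (hasDerivAt_integral_Ioi hgauss (by fun_prop)).comp x hg

/-- The weight `exp (-(a / b) * x₀)` of the image source is what makes it agree with the source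
on the wall `x = 0`. -/
theorem image_exponent_eq {a b t : ℝ} (x₀ : ℝ) (hb : b ≠ 0) (ht : t ≠ 0) :
    -(a / b) * x₀ - (x₀ - a * t) ^ 2 / (4 * b * t) = -(x₀ + a * t) ^ 2 / (4 * b * t) := by
  field_simp
  ring

theorem hasDerivAt_smolFund_zero {a b x₀ t : ℝ} (hb : 0 < b) (ht : 0 < t) :
    HasDerivAt (fun ξ => smolFund a b x₀ ξ t) (a / b * smolFund a b x₀ 0 t) 0 := by
  have hsource := (((hasDerivAt_id' (0:ℝ)).sub_const x₀).sub_const (a * t)).fun_pow 2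
    |>.fun_neg |>.div_const (4 * b * t) |>.exp |>.const_mul (√(4 * π * b * t))⁻¹
  have himage := (((hasDerivAt_id' (0:ℝ)).add_const x₀).sub_const (a * t)).fun_pow 2
    |>.div_const (4 * b * t) |>.const_sub (-(a / b) * x₀) |>.exp
    |>.const_mul (√(4 * π * b * t))⁻¹
  have htail := (((hasDerivAt_id' (0:ℝ)).add_const x₀).add_const (a * t)).div_const
    √(4 * b * t) |>.integral_Ioi_exp_neg_sq |>.const_mul (2 / √π)
  have hcorrection :=
    ((hasDerivAt_id' (0:ℝ)).const_mul (a / b)).exp.const_mul (a / (2 * b)) |>.fun_mul htail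
  refine ((hsource.add himage).sub hcorrection).congr_deriv ?_
  have hbt : 0 < 4 * b * t := by positivity
  have hsqrt : √(4 * π * b * t) = √π * √(4 * b * t) := by
    rw [← sqrt_mul pi_pos.le]
    ring_nf
  have hsq : -(x₀ + a * t) ^ 2 / (4 * b * t) = -((x₀ + a * t) / √(4 * b * t)) ^ 2 := by
    rw [div_pow, sq_sqrt hbt.le, neg_div]
  -- at `x = 0` all three Gaussian factors equal `exp (-(x₀ + a t)² / (4bt))`
  simp only [smolFund, zero_sub, zero_add, mul_zero, exp_zero, neg_sub_left, neg_sq,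
    image_exponent_eq x₀ hb.ne' ht.ne']
  rw [add_comm (a * t) x₀, hsq, hsqrt]
  field_simp
  ring

theorem stmt_7_general (a b x₀ : ℝ) (hb : 0 < b) :
    ∀ t > (0:ℝ),
      a * smolFund a b x₀ 0 t - b * deriv (fun ξ => smolFund a b x₀ ξ t) 0 = 0 := by
  intro t ht
  rw [(hasDerivAt_smolFund_zero hb ht).deriv, ← mul_assoc, mul_div_cancel₀ a hb.ne', sub_self]

/-- The Smoluchowski fundamental solution satisfies the no-flux boundary
condition `a ρ^F(0,t) − b ∂_x ρ^F(0,t) = 0` for all `t > 0`. -/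
theorem stmt_7 (a b x₀ : ℝ) (hb : 0 < b) (hx₀ : 0 ≤ x₀) :
    ∀ t > (0:ℝ),
      a * smolFund a b x₀ 0 t - b * deriv (fun ξ => smolFund a b x₀ ξ t) 0 = 0 :=
  stmt_7_general a b x₀ hb
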